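/- Model Minkowski space as M = ℝ × E, where E is a real inner product space with dim E ≥ 2 (so d ≥ 3). Let x₁, x₂, x₃ ∈ M satisfy: x₁ and x₂ spacelike separated, x₁ → x₃, and x₂ → x₃. Then the set F = {x₄ ∈ M : x₁ → x₄, x₂ → x₄, and x₄ spacelike separated from x₃} is nonempty and path-connected. -/

import Mathlib

/-!
`I⁺(x₁) ∩ I⁺(x₂)` is open and convex and contains `x₃`, so it contains a small sphere around
`x₃` inside the time slice of `x₃`. That sphere consists of points spacelike to `x₃`, and it is
path connected because `dim E ≥ 2`. Any other point `y` of the fiber is joined to the sphere by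
the straight segment ending at the sphere point in the spatial direction `y.2 - x₃.2`: convexity
keeps the segment in both cones, and along it the time separation from `x₃` shrinks linearly
while the spatial separation stays a positive multiple of `y.2 - x₃.2`.
-/

open Metric

theorem IsPathConnected.of_forall_joinedIn {X : Type*} [TopologicalSpace X] {F S : Set X}
    (hS : IsPathConnected S) (hSF : S ⊆ F) (h : ∀ y ∈ F, ∃ z ∈ S, JoinedIn F y z) :
    IsPathConnected F := by
  obtain ⟨b, hb⟩ := hS.nonempty
  refine ⟨b, hSF hb, fun {y} hy => ?_⟩
  obtain ⟨z, hz, hyz⟩ := h y hy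
  exact (hyz.trans ((hS.joinedIn z hz b hb).mono hSF)).symm

namespace Minkowski

variable {E : Type*} [NormedAddCommGroup E]

def chronologicalFuture (x : ℝ × E) : Set (ℝ × E) := {y | y.1 - x.1 > ‖y.2 - x.2‖}

def spacelikeRegion (x : ℝ × E) : Set (ℝ × E) := {y | |y.1 - x.1| < ‖y.2 - x.2‖}

theorem mem_chronologicalFuture {x y : ℝ × E} :
    y ∈ chronologicalFuture x ↔ ‖y.2 - x.2‖ < y.1 - x.1 := Iff.rfl

theorem mem_spacelikeRegion {x y : ℝ × E} :
    y ∈ spacelikeRegion x ↔ |y.1 - x.1| < ‖y.2 - x.2‖ := Iff.rfl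

theorem isOpen_chronologicalFuture (x : ℝ × E) : IsOpen (chronologicalFuture x) :=
  isOpen_lt (by fun_prop) (by fun_prop)

def spatialSphere (x : ℝ × E) (r : ℝ) : Set (ℝ × E) := Prod.mk x.1 '' sphere x.2 r

theorem spatialSphere_subset_spacelikeRegion (x : ℝ × E) {r : ℝ} (hr : 0 < r) :
    spatialSphere x r ⊆ spacelikeRegion x := by
  rintro _ ⟨w, hw, rfl⟩
  rw [mem_sphere_iff_norm] at hw
  simpa [mem_spacelikeRegion, hw] using hr

theorem exists_spatialSphere_subset {U : Set (ℝ × E)} {x : ℝ × E} (hU : IsOpen U) (hx : x ∈ U) :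
    ∃ r > 0, spatialSphere x r ⊆ U := by
  obtain ⟨ε, hε, hball⟩ := Metric.isOpen_iff.1 hU x hx
  refine ⟨ε / 2, half_pos hε, ?_⟩
  rintro _ ⟨w, hw, rfl⟩
  apply hball
  rw [mem_ball, Prod.dist_eq, dist_self, mem_sphere.1 hw, max_eq_right (half_pos hε).le]
  exact half_lt_self hε

variable [NormedSpace ℝ E]

theorem convex_chronologicalFuture (x : ℝ × E) : Convex ℝ (chronologicalFuture x) := by
  refine convex_iff_forall_pos.2 fun y hy z hz a b ha hb hab => ?_
  have hsnd : (a • y + b • z).2 - x.2 = a • (y.2 - x.2) + b • (z.2 - x.2) := by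
    simp only [Prod.snd_add, Prod.smul_snd]
    linear_combination (norm := module) hab • x.2
  have hfst : (a • y + b • z).1 - x.1 = a * (y.1 - x.1) + b * (z.1 - x.1) := by
    simp only [Prod.fst_add, Prod.smul_fst, smul_eq_mul]
    linear_combination x.1 * hab
  rw [mem_chronologicalFuture] at hy hz ⊢
  rw [hsnd, hfst]
  calc ‖a • (y.2 - x.2) + b • (z.2 - x.2)‖ ≤ a * ‖y.2 - x.2‖ + b * ‖z.2 - x.2‖ := by
        refine (norm_add_le _ _).trans_eq ?_
        rw [norm_smul_of_nonneg ha.le, norm_smul_of_nonneg hb.le]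
    _ < a * (y.1 - x.1) + b * (z.1 - x.1) := by gcongr

theorem segment_subset_spacelikeRegion {x y : ℝ × E} (hy : y ∈ spacelikeRegion x) {c : ℝ}
    (hc : 0 < c) : segment ℝ y (x.1, x.2 + c • (y.2 - x.2)) ⊆ spacelikeRegion x := by
  rw [segment_eq_image]
  rintro _ ⟨t, ⟨ht0, ht1⟩, rfl⟩
  have hfst : ((1 - t) • y + t • (x.1, x.2 + c • (y.2 - x.2))).1 - x.1
      = (1 - t) * (y.1 - x.1) := by
    simp only [Prod.fst_add, Prod.smul_fst, smul_eq_mul]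
    ring
  have hsnd : ((1 - t) • y + t • (x.1, x.2 + c • (y.2 - x.2))).2 - x.2
      = ((1 - t) + t * c) • (y.2 - x.2) := by
    simp only [Prod.snd_add, Prod.smul_snd]
    module
  rw [mem_spacelikeRegion] at hy ⊢
  rw [hfst, hsnd, abs_mul, abs_of_nonneg (sub_nonneg.2 ht1),
    norm_smul_of_nonneg (by positivity)]
  rcases ht1.lt_or_eq with ht1 | rfl
  · nlinarith [mul_nonneg ht0 (mul_pos hc ((abs_nonneg _).trans_lt hy)).le]
  · simpa using mul_pos hc ((abs_nonneg _).trans_lt hy)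

theorem isPathConnected_spatialSphere (hE : 1 < Module.rank ℝ E) (x : ℝ × E) {r : ℝ}
    (hr : 0 ≤ r) : IsPathConnected (spatialSphere x r) :=
  (isPathConnected_sphere hE x.2 hr).image (by fun_prop)

theorem isPathConnected_inter_spacelikeRegion (hE : 1 < Module.rank ℝ E) {U : Set (ℝ × E)}
    {x : ℝ × E} (hU : IsOpen U) (hUc : Convex ℝ U) (hx : x ∈ U) :
    IsPathConnected (U ∩ spacelikeRegion x) := by
  obtain ⟨r, hr, hrU⟩ := exists_spatialSphere_subset hU hx
  have hS : spatialSphere x r ⊆ U ∩ spacelikeRegion x :=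
    Set.subset_inter hrU (spatialSphere_subset_spacelikeRegion x hr)
  refine (isPathConnected_spatialSphere hE x hr.le).of_forall_joinedIn hS ?_
  rintro y ⟨hyU, hy⟩
  have hv : 0 < ‖y.2 - x.2‖ := (abs_nonneg _).trans_lt hy
  set c := r / ‖y.2 - x.2‖
  have hz : (x.1, x.2 + c • (y.2 - x.2)) ∈ spatialSphere x r := by
    refine ⟨_, ?_, rfl⟩
    rw [mem_sphere_iff_norm, add_sub_cancel_left, norm_smul_of_nonneg (by positivity),
      div_mul_cancel₀ _ hv.ne']
  refine ⟨_, hz, JoinedIn.of_segment_subset (Set.subset_inter ?_ ?_)⟩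
  · exact hUc.segment_subset hyU (hrU hz)
  · exact segment_subset_spacelikeRegion hy (by positivity)

end Minkowski

open Minkowski in
theorem stmt_14_general {E : Type*} [NormedAddCommGroup E] [InnerProductSpace ℝ E]
    (hdim : 2 ≤ Module.rank ℝ E) (x₁ x₂ x₃ : ℝ × E)
    (h13 : x₃.1 - x₁.1 > ‖x₃.2 - x₁.2‖)
    (h23 : x₃.1 - x₂.1 > ‖x₃.2 - x₂.2‖) :
    ({y : ℝ × E | y.1 - x₁.1 > ‖y.2 - x₁.2‖ ∧ y.1 - x₂.1 > ‖y.2 - x₂.2‖ ∧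
        |y.1 - x₃.1| < ‖y.2 - x₃.2‖}).Nonempty ∧
    IsPathConnected {y : ℝ × E | y.1 - x₁.1 > ‖y.2 - x₁.2‖ ∧ y.1 - x₂.1 > ‖y.2 - x₂.2‖ ∧
        |y.1 - x₃.1| < ‖y.2 - x₃.2‖} := by
  have hF : IsPathConnected
      ((chronologicalFuture x₁ ∩ chronologicalFuture x₂) ∩ spacelikeRegion x₃) :=
    isPathConnected_inter_spacelikeRegion (lt_of_lt_of_le (by norm_num) hdim)
      ((isOpen_chronologicalFuture x₁).inter (isOpen_chronologicalFuture x₂))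
      ((convex_chronologicalFuture x₁).inter (convex_chronologicalFuture x₂)) ⟨h13, h23⟩
  have hFeq : (chronologicalFuture x₁ ∩ chronologicalFuture x₂) ∩ spacelikeRegion x₃ =
      {y : ℝ × E | y.1 - x₁.1 > ‖y.2 - x₁.2‖ ∧ y.1 - x₂.1 > ‖y.2 - x₂.2‖ ∧
        |y.1 - x₃.1| < ‖y.2 - x₃.2‖} :=
    Set.ext fun _ => and_assoc
  rw [hFeq] at hF
  exact ⟨hF.nonempty, hF⟩

/-- Fiber connectedness for causal Type 10: in Minkowski space `ℝ × E` with
`dim E ≥ 2`, if `x₁` and `x₂` are spacelike separated, `x₁ → x₃` and `x₂ → x₃`,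
then the set of points `x₄` with `x₁ → x₄`, `x₂ → x₄`, and `x₄` spacelike from
`x₃` is nonempty and path-connected. -/
theorem stmt_14 {E : Type*} [NormedAddCommGroup E] [InnerProductSpace ℝ E]
    (hdim : 2 ≤ Module.rank ℝ E) (x₁ x₂ x₃ : ℝ × E)
    (h12 : |x₁.1 - x₂.1| < ‖x₁.2 - x₂.2‖)
    (h13 : x₃.1 - x₁.1 > ‖x₃.2 - x₁.2‖)
    (h23 : x₃.1 - x₂.1 > ‖x₃.2 - x₂.2‖) :
    ({y : ℝ × E | y.1 - x₁.1 > ‖y.2 - x₁.2‖ ∧ y.1 - x₂.1 > ‖y.2 - x₂.2‖ ∧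
        |y.1 - x₃.1| < ‖y.2 - x₃.2‖}).Nonempty ∧
    IsPathConnected {y : ℝ × E | y.1 - x₁.1 > ‖y.2 - x₁.2‖ ∧ y.1 - x₂.1 > ‖y.2 - x₂.2‖ ∧
        |y.1 - x₃.1| < ‖y.2 - x₃.2‖} :=
  stmt_14_general hdim x₁ x₂ x₃ h13 h23
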